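/- Let A₁,...,A_N and B₁,...,B_N be bounded operators on a Hilbert space H, let λ₁,...,λ_N > 0, and let X be a bounded operator. Then ‖Σ_{n=1}^N λₙ^{1/2} AₙXBₙ‖ ≤ ‖Σ_{n=1}^N λₙ AₙAₙ*‖^{1/2} · ‖Σ_{n=1}^N Bₙ*Bₙ‖^{1/2} · ‖X‖. -/

import Mathlib

/-!
Write `col D : H → ℓ²(ι, H)` for `x ↦ (Dₙ x)ₙ`, `row C` for its transpose `(yₙ)ₙ ↦ ∑ₙ Cₙ yₙ`,
and `diag X` for `X` acting on each coordinate. Then `∑ₙ Cₙ X Dₙ = row C ∘ diag X ∘ col D`,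
`‖diag X‖ ≤ ‖X‖`, and the C⋆-identity `‖T⋆T‖ = ‖T‖²` gives `‖col D‖² = ‖∑ₙ Dₙ⋆Dₙ‖` and
`‖row C‖² = ‖∑ₙ CₙCₙ⋆‖`. The theorem is the case `Cₙ = λₙ^{1/2} Aₙ`, `Dₙ = Bₙ`.
-/

open ContinuousLinearMap

namespace ContinuousLinearMap

variable {𝕜 ι E F G K : Type*} [RCLike 𝕜]
  [NormedAddCommGroup E] [InnerProductSpace 𝕜 E] [NormedAddCommGroup F] [InnerProductSpace 𝕜 F]
  [NormedAddCommGroup G] [InnerProductSpace 𝕜 G] [NormedAddCommGroup K] [InnerProductSpace 𝕜 K]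

noncomputable def columnOp (D : ι → E →L[𝕜] F) : E →L[𝕜] PiLp 2 (fun _ : ι => F) :=
  (PiLp.continuousLinearEquiv 2 𝕜 (fun _ : ι => F)).symm.toContinuousLinearMap ∘L pi D

@[simp]
theorem columnOp_apply (D : ι → E →L[𝕜] F) (x : E) (n : ι) : columnOp D x n = D n x := rfl

noncomputable def diagOp (X : F →L[𝕜] G) :
    PiLp 2 (fun _ : ι => F) →L[𝕜] PiLp 2 (fun _ : ι => G) :=
  (PiLp.continuousLinearEquiv 2 𝕜 (fun _ : ι => G)).symm.toContinuousLinearMap ∘L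
    pi fun n => X ∘L PiLp.proj 2 (fun _ : ι => F) n

@[simp]
theorem diagOp_apply (X : F →L[𝕜] G) (y : PiLp 2 (fun _ : ι => F)) (n : ι) :
    diagOp X y n = X (y n) := rfl

variable [Fintype ι]

theorem norm_diagOp_le (X : F →L[𝕜] G) :
    ‖(diagOp X : PiLp 2 (fun _ : ι => F) →L[𝕜] _)‖ ≤ ‖X‖ := by
  refine opNorm_le_bound _ (norm_nonneg X) fun y => le_of_sq_le_sq ?_ (by positivity)
  simp only [PiLp.norm_sq_eq_of_L2, mul_pow, diagOp_apply, Finset.mul_sum]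
  gcongr with n
  rw [← mul_pow]
  gcongr
  exact le_opNorm X (y n)

section Complete

variable [CompleteSpace E] [CompleteSpace F]

theorem adjoint_columnOp_apply (D : ι → E →L[𝕜] F) (y : PiLp 2 (fun _ : ι => F)) :
    adjoint (columnOp D) y = ∑ n, adjoint (D n) (y n) := by
  refine ext_inner_left 𝕜 fun x => ?_
  simp [adjoint_inner_right, PiLp.inner_apply, inner_sum]

theorem adjoint_columnOp_comp_columnOp (D : ι → E →L[𝕜] F) :
    adjoint (columnOp D) ∘L columnOp D = ∑ n, adjoint (D n) ∘L D n := by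
  ext x
  simp [adjoint_columnOp_apply]

theorem norm_columnOp (D : ι → E →L[𝕜] F) :
    ‖columnOp D‖ = √‖∑ n, adjoint (D n) ∘L D n‖ := by
  rw [← adjoint_columnOp_comp_columnOp, norm_adjoint_comp_self,
    Real.sqrt_mul_self (norm_nonneg _)]

noncomputable def rowOp (C : ι → E →L[𝕜] F) : PiLp 2 (fun _ : ι => E) →L[𝕜] F :=
  adjoint (columnOp fun n => adjoint (C n))

theorem rowOp_apply (C : ι → E →L[𝕜] F) (y : PiLp 2 (fun _ : ι => E)) :
    rowOp C y = ∑ n, C n (y n) := by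
  simp [rowOp, adjoint_columnOp_apply]

theorem norm_rowOp (C : ι → E →L[𝕜] F) :
    ‖rowOp C‖ = √‖∑ n, C n ∘L adjoint (C n)‖ := by
  simp [rowOp, norm_columnOp]

end Complete

theorem sum_comp_comp_eq_rowOp_comp_diagOp_comp_columnOp [CompleteSpace G] [CompleteSpace K]
    (C : ι → G →L[𝕜] K) (X : F →L[𝕜] G) (D : ι → E →L[𝕜] F) :
    ∑ n, C n ∘L X ∘L D n = rowOp C ∘L diagOp X ∘L columnOp D := by
  ext x
  simp [rowOp_apply]

theorem norm_sum_comp_comp_le [CompleteSpace E] [CompleteSpace F] [CompleteSpace G]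
    [CompleteSpace K] (C : ι → G →L[𝕜] K) (X : F →L[𝕜] G) (D : ι → E →L[𝕜] F) :
    ‖∑ n, C n ∘L X ∘L D n‖ ≤
      √‖∑ n, C n ∘L adjoint (C n)‖ * √‖∑ n, adjoint (D n) ∘L D n‖ * ‖X‖ := by
  rw [sum_comp_comp_eq_rowOp_comp_diagOp_comp_columnOp, ← norm_rowOp, ← norm_columnOp,
    mul_right_comm]
  calc ‖rowOp C ∘L diagOp X ∘L columnOp D‖
      ≤ ‖rowOp C‖ * (‖(diagOp X : PiLp 2 (fun _ : ι => F) →L[𝕜] _)‖ * ‖columnOp D‖) :=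
        (opNorm_comp_le _ _).trans (by gcongr; exact opNorm_comp_le _ _)
    _ ≤ ‖rowOp C‖ * ‖X‖ * ‖columnOp D‖ := by
        rw [← mul_assoc]
        gcongr
        exact norm_diagOp_le X

end ContinuousLinearMap

theorem ContinuousLinearMap.adjoint_real_smul {E F : Type*}
    [NormedAddCommGroup E] [InnerProductSpace ℂ E] [CompleteSpace E]
    [NormedAddCommGroup F] [InnerProductSpace ℂ F] [CompleteSpace F]
    (r : ℝ) (A : E →L[ℂ] F) : adjoint (r • A) = r • adjoint A := by
  rw [RCLike.real_smul_eq_coe_smul (K := ℂ), map_smulₛₗ, RCLike.conj_ofReal,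
    ← RCLike.real_smul_eq_coe_smul]

theorem cauchy_schwarz_elementary_transformer {H : Type*} [NormedAddCommGroup H]
    [InnerProductSpace ℂ H] [CompleteSpace H]
    (N : ℕ) (A B : Fin N → H →L[ℂ] H) (l : Fin N → ℝ) (hl : ∀ n, 0 < l n)
    (X : H →L[ℂ] H) :
    ‖∑ n, Real.sqrt (l n) • (A n ∘L X ∘L B n)‖ ≤
      Real.sqrt ‖∑ n, l n • (A n ∘L adjoint (A n))‖ *
        Real.sqrt ‖∑ n, adjoint (B n) ∘L B n‖ * ‖X‖ := by
  have hC : ∀ n, (√(l n) • A n) ∘L adjoint (√(l n) • A n) = l n • (A n ∘L adjoint (A n)) :=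
    fun n => by
      rw [adjoint_real_smul, smul_comp, comp_smul, smul_smul, Real.mul_self_sqrt (hl n).le]
  simpa only [hC, smul_comp] using norm_sum_comp_comp_le (fun n => √(l n) • A n) X B
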